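/- If every unit disk graph of height 2 admits a conflict-free 2-coloring, then every unit disk graph admits a conflict-free 4-coloring. (The derivation subdivides the plane into horizontal strips of height 2 and colors the subgraphs in even strips with colors {1,2} and those in odd strips with colors {3,4}.) -/

import Mathlib

/-- A conflict-free coloring of `G` with `k` colors: a partial coloring
(uncolored vertices get `none`) such that every vertex has, in its closed
neighborhood, a colored vertex whose color occurs exactly once there. -/
def IsCFColoring {V : Type*} (G : SimpleGraph V) {k : ℕ} (χ : V → Option (Fin k)) : Prop :=
  ∀ v : V, ∃ u ∈ insert v (G.neighborSet v), (χ u).isSome ∧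
    ∀ w ∈ insert v (G.neighborSet v), χ w = χ u → w = u

/-- `G` admits a conflict-free coloring with `k` colors. -/
def HasCFColoring {V : Type*} (G : SimpleGraph V) (k : ℕ) : Prop :=
  ∃ χ : V → Option (Fin k), IsCFColoring G χ

/-- The unit disk graph on points `p`: distinct vertices are adjacent iff the
Euclidean distance of their points is at most 2 (the unit disks intersect). -/
def unitDiskGraph {V : Type*} (p : V → EuclideanSpace ℝ (Fin 2)) : SimpleGraph V where
  Adj u v := u ≠ v ∧ dist (p u) (p v) ≤ 2
  symm := by
    constructor
    intro u v ⟨h1, h2⟩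
    exact ⟨h1.symm, by rwa [dist_comm]⟩
  loopless := by
    constructor
    intro v ⟨h1, _⟩
    exact h1 rfl


/-!
Cut the plane into horizontal strips `2i ≤ y < 2i + 2`. Two adjacent points have `y`-coordinates
at distance at most `2`, so they lie in the same or in neighbouring strips. Translated vertically,
each strip is a unit disk graph of height `2`, which has a conflict-free coloring with two colors;
use colors `{0, 1}` on the even strips and `{2, 3}` on the odd ones. A vertex keeps the uniquely
colored neighbour it has in its own strip: any closed neighbour sharing that color lies in a strip
of the same parity, hence in the same strip.
-/

open SimpleGraph

section CFColoring

variable {V : Type*} {k : ℕ}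

def IsCFColoringOn (G : SimpleGraph V) (S : Set V) (χ : V → Option (Fin k)) : Prop :=
  ∀ v ∈ S, ∃ u ∈ insert v (G.neighborSet v) ∩ S, (χ u).isSome ∧
    ∀ w ∈ insert v (G.neighborSet v) ∩ S, χ w = χ u → w = u

lemma mem_insert_neighborSet_induce {G : SimpleGraph V} {S : Set V} {v w : S} :
    w ∈ insert v ((G.induce S).neighborSet v) ↔ w.1 ∈ insert v.1 (G.neighborSet v.1) := by
  simp [Subtype.ext_iff]

lemma HasCFColoring.exists_isCFColoringOn {G : SimpleGraph V} {S : Set V}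
    (h : HasCFColoring (G.induce S) k) : ∃ χ : V → Option (Fin k), IsCFColoringOn G S χ := by
  classical
  obtain ⟨χ, hχ⟩ := h
  obtain ⟨ψ, hψ⟩ : ∃ ψ : V → Option (Fin k), ∀ w : S, ψ w = χ w :=
    ⟨fun v => if hv : v ∈ S then χ ⟨v, hv⟩ else none, fun w => by simp⟩
  refine ⟨ψ, fun v hv => ?_⟩
  obtain ⟨u, hu, hu_some, hu_unique⟩ := hχ ⟨v, hv⟩
  refine ⟨u, ⟨mem_insert_neighborSet_induce.1 hu, u.2⟩, by rwa [hψ], ?_⟩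
  rintro w ⟨hw, hwS⟩ hwu
  rw [hψ u, (hψ ⟨w, hwS⟩ : ψ w = _)] at hwu
  exact congrArg Subtype.val (hu_unique ⟨w, hwS⟩ (mem_insert_neighborSet_induce.2 hw) hwu)

def parityShift (i : ℤ) (a : Fin k) : Fin (k + k) :=
  finSumFinEquiv (if Even i then Sum.inl a else Sum.inr a)

lemma parityShift_eq_parityShift_iff {i j : ℤ} {a b : Fin k} :
    parityShift i a = parityShift j b ↔ (Even i ↔ Even j) ∧ a = b := by
  unfold parityShift
  rw [finSumFinEquiv.apply_eq_iff_eq]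
  by_cases hi : Even i <;> by_cases hj : Even j <;> simp [hi, hj]

lemma eq_of_abs_sub_le_one_of_even_iff {m n : ℤ} (h : |m - n| ≤ 1) (hmn : Even m ↔ Even n) :
    m = n := by
  rw [abs_le] at h
  rw [Int.even_iff, Int.even_iff] at hmn
  omega

theorem hasCFColoring_add_of_strips (G : SimpleGraph V) (f : V → ℤ)
    (hf : ∀ u v, G.Adj u v → |f u - f v| ≤ 1)
    (hstrip : ∀ i : ℤ, HasCFColoring (G.induce {v | f v = i}) k) :
    HasCFColoring G (k + k) := by
  choose χ hχ using fun i => (hstrip i).exists_isCFColoringOn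
  refine ⟨fun v => (χ (f v) v).map (parityShift (f v)), fun v => ?_⟩
  obtain ⟨u, ⟨hu, hfu : f u = f v⟩, hu_some, hu_unique⟩ := hχ (f v) v rfl
  refine ⟨u, hu, by simpa [hfu] using hu_some, fun w hw hwu => ?_⟩
  have hw_near : |f w - f v| ≤ 1 := by
    rcases hw with rfl | hadj
    · simp
    · exact hf w v hadj.symm
  obtain ⟨a, ha⟩ := Option.isSome_iff_exists.1 hu_some
  obtain ⟨b, hb, hba⟩ : ∃ b, χ (f w) w = some b ∧ parityShift (f w) b = parityShift (f v) a := by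
    simpa [hfu, ha] using hwu
  obtain ⟨hparity, rfl⟩ := parityShift_eq_parityShift_iff.1 hba
  have hfw : f w = f v := eq_of_abs_sub_le_one_of_even_iff hw_near hparity
  exact hu_unique w ⟨hw, hfw⟩ (by rw [ha, ← hfw, hb])

end CFColoring

section UnitDiskGraph

variable {V : Type*}

lemma unitDiskGraph_induce (p : V → EuclideanSpace ℝ (Fin 2)) (S : Set V) :
    (unitDiskGraph p).induce S = unitDiskGraph (fun v : S => p v) := by
  ext u v
  simp [unitDiskGraph, Subtype.ext_iff]

lemma unitDiskGraph_comp_isometry (p : V → EuclideanSpace ℝ (Fin 2))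
    {Φ : EuclideanSpace ℝ (Fin 2) → EuclideanSpace ℝ (Fin 2)} (hΦ : Isometry Φ) :
    unitDiskGraph (Φ ∘ p) = unitDiskGraph p := by
  ext u v
  simp [unitDiskGraph, hΦ.dist_eq]

lemma abs_floor_sub_floor_le_one {a b : ℝ} (h : |a - b| ≤ 1) : |⌊a⌋ - ⌊b⌋| ≤ 1 := by
  rw [abs_le] at h ⊢
  have hab : ⌊a⌋ ≤ ⌊b + 1⌋ := Int.floor_le_floor (by linarith)
  have hba : ⌊b⌋ ≤ ⌊a + 1⌋ := Int.floor_le_floor (by linarith)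
  rw [Int.floor_add_one] at hab hba
  omega

lemma abs_floor_half_sub_le_one_of_unitDiskGraph_adj {p : V → EuclideanSpace ℝ (Fin 2)} {u v : V}
    (h : (unitDiskGraph p).Adj u v) : |⌊p u 1 / 2⌋ - ⌊p v 1 / 2⌋| ≤ 1 := by
  apply abs_floor_sub_floor_le_one
  have hy : |p u 1 - p v 1| ≤ 2 := by
    simpa [Real.dist_eq] using (PiLp.dist_apply_le (p u) (p v) 1).trans h.2
  rw [← sub_div, abs_div, abs_two]
  linarith

lemma sub_single_mem_Icc_of_floor_half_eq {x : EuclideanSpace ℝ (Fin 2)} {i : ℤ}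
    (h : ⌊x 1 / 2⌋ = i) :
    (x - EuclideanSpace.single 1 (2 * (i : ℝ)) : EuclideanSpace ℝ (Fin 2)) 1 ∈ Set.Icc (0 : ℝ) 2 := by
  have hlow := Int.floor_le (x 1 / 2)
  have hhigh := Int.lt_floor_add_one (x 1 / 2)
  rw [h] at hlow hhigh
  simp only [PiLp.sub_apply, PiLp.single_apply, if_true, Set.mem_Icc]
  constructor <;> linarith

end UnitDiskGraph

theorem stmt9
    (h : ∀ (V : Type) [Fintype V] (p : V → EuclideanSpace ℝ (Fin 2)),
      (∀ v : V, p v 1 ∈ Set.Icc (0 : ℝ) 2) → HasCFColoring (unitDiskGraph p) 2) :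
    ∀ (V : Type) [Fintype V] (p : V → EuclideanSpace ℝ (Fin 2)),
      HasCFColoring (unitDiskGraph p) 4 := by
  intro V _ p
  classical
  refine hasCFColoring_add_of_strips (k := 2) _ (fun v => ⌊p v 1 / 2⌋)
    (fun _ _ => abs_floor_half_sub_le_one_of_unitDiskGraph_adj) fun i => ?_
  let shift := IsometryEquiv.subRight (EuclideanSpace.single (1 : Fin 2) (2 * (i : ℝ)))
  rw [unitDiskGraph_induce, ← unitDiskGraph_comp_isometry _ shift.isometry]
  exact h _ _ fun v => sub_single_mem_Icc_of_floor_half_eq v.2
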